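/- arXiv:1709.04719 — 4 statements merged into one kernel-verified Lean document; each statement's English description precedes it below -/
import Mathlib

section
/- Suppose S : ({1,ν,ν−1})^I → ℝ is a function on assignments of weights indexed by a finite set I, which is multilinear in the sense that S is additive in each coordinate (replacing ν−1 by the formal difference of the assignments with ν and with 1 in that coordinate), and suppose |S(h) − 1| ≤ δ whenever every h_i ∈ {1, ν}. If exactly K ≥ 1 coordinates of h equal ν−1, then |S(h)| ≤ 2^K δ. -/
open scoped Classical

private lemma stmt_1_aux {I : Type*} [Fintype I] [DecidableEq I] {α : Type*}
    (w1 wν wd : α) (S : (I → α) → ℝ) (δ : ℝ) (hδ : 0 < δ)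
    (hmulti : ∀ (h : I → α) (i : I),
      S (Function.update h i wd) = S (Function.update h i wν) - S (Function.update h i w1))
    (hbase : ∀ h : I → α, (∀ i, h i = w1 ∨ h i = wν) → |S h - 1| ≤ δ)
    (hd1 : wd ≠ w1) (hdν : wd ≠ wν) :
    ∀ (K : ℕ) (h : I → α), (∀ i, h i = w1 ∨ h i = wν ∨ h i = wd) →
      (Finset.univ.filter (fun i => h i = wd)).card = K →
      |S h - (if K = 0 then 1 else 0)| ≤ 2 ^ K * δ := by
  intro K
  induction K with
  | zero =>
    intro h hh hcard
    simp only [if_pos rfl, pow_zero, one_mul]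
    apply hbase
    intro i
    have hi : h i ≠ wd := by
      intro hwd
      have : i ∈ Finset.univ.filter (fun i => h i = wd) := by
        simp [hwd]
      rw [Finset.card_eq_zero] at hcard
      simp [hcard] at this
    rcases hh i with h1 | h2 | h3
    · exact Or.inl h1
    · exact Or.inr h2
    · exact absurd h3 hi
  | succ K ih =>
    intro h hh hcard
    have hne : (Finset.univ.filter (fun i => h i = wd)).Nonempty := by
      rw [← Finset.card_pos, hcard]; omega
    obtain ⟨i, hi⟩ := hne
    have hiwd : h i = wd := (Finset.mem_filter.mp hi).2
    have hupd : Function.update h i wd = h := by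
      funext j
      rcases eq_or_ne j i with rfl | hji
      · simp [hiwd]
      · simp [Function.update_of_ne hji]
    have key : S h = S (Function.update h i wν) - S (Function.update h i w1) := by
      have := hmulti h i; rwa [hupd] at this
    have hcard' : ∀ w : α, w ≠ wd →
        (Finset.univ.filter (fun j => Function.update h i w j = wd)).card = K := by
      intro w hw
      have : Finset.univ.filter (fun j => Function.update h i w j = wd)
          = (Finset.univ.filter (fun j => h j = wd)).erase i := by
        ext j
        rcases eq_or_ne j i with rfl | hji
        · simp [Function.update_self, fun hc => hw hc]
        · simp [Function.update_of_ne hji, hji]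
      rw [this, Finset.card_erase_of_mem hi, hcard]
      rfl
    have hh' : ∀ w : α, (w = w1 ∨ w = wν ∨ w = wd) →
        ∀ j, Function.update h i w j = w1 ∨ Function.update h i w j = wν ∨
          Function.update h i w j = wd := by
      intro w hw j
      rcases eq_or_ne j i with rfl | hji
      · simpa using hw
      · simp only [Function.update_of_ne hji]; exact hh j
    have b1 := ih (Function.update h i w1) (hh' w1 (Or.inl rfl))
      (hcard' w1 (fun hc => hd1 hc.symm))
    have bν := ih (Function.update h i wν) (hh' wν (Or.inr (Or.inl rfl)))
      (hcard' wν (fun hc => hdν hc.symm))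
    have : |S h - 0| ≤ 2 ^ (K + 1) * δ := by
      rw [key, sub_zero]
      set c : ℝ := if K = 0 then 1 else 0
      calc |S (Function.update h i wν) - S (Function.update h i w1)|
          = |(S (Function.update h i wν) - c) - (S (Function.update h i w1) - c)| := by
            ring_nf
        _ ≤ |S (Function.update h i wν) - c| + |S (Function.update h i w1) - c| :=
            abs_sub _ _
        _ ≤ 2 ^ K * δ + 2 ^ K * δ := add_le_add bν b1
        _ = 2 ^ (K + 1) * δ := by ring
    simpa using this

/-- Abstract form of the linear forms expansion lemma: `w1`, `wν`, `wd` are the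
formal weights `1`, `ν`, `ν - 1` respectively. -/
theorem stmt_1 {I : Type*} [Fintype I] [DecidableEq I] {α : Type*}
    (w1 wν wd : α) (S : (I → α) → ℝ) (δ : ℝ) (hδ : 0 < δ)
    (hmulti : ∀ (h : I → α) (i : I),
      S (Function.update h i wd) = S (Function.update h i wν) - S (Function.update h i w1))
    (hbase : ∀ h : I → α, (∀ i, h i = w1 ∨ h i = wν) → |S h - 1| ≤ δ)
    (h : I → α) (hh : ∀ i, h i = w1 ∨ h i = wν ∨ h i = wd)
    (K : ℕ) (hK1 : 1 ≤ K)
    (hKcard : (Finset.univ.filter (fun i => h i = wd)).card = K) :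
    |S h| ≤ 2 ^ K * δ := by
  have h2K : (2 : ℝ) * δ ≤ 2 ^ K * δ := by
    have : (2 : ℝ) ≤ 2 ^ K := by
      calc (2 : ℝ) = 2 ^ 1 := (pow_one 2).symm
      _ ≤ 2 ^ K := pow_le_pow_right₀ (by norm_num) hK1
    nlinarith
  -- pick a coordinate with h i = wd
  have hne : (Finset.univ.filter (fun i => h i = wd)).Nonempty := by
    rw [← Finset.card_pos, hKcard]; omega
  obtain ⟨i0, hi0⟩ := hne
  have hi0wd : h i0 = wd := (Finset.mem_filter.mp hi0).2
  have hupd : Function.update h i0 wd = h := by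
    funext j
    rcases eq_or_ne j i0 with rfl | hji
    · simp [hi0wd]
    · simp [Function.update_of_ne hji]
  by_cases hdν : wd = wν
  · -- then S (update h i0 w1) = 0 forces δ ≥ 1
    have hall : ∀ j, h j = w1 ∨ h j = wν := by
      intro j
      rcases hh j with h1 | h2 | h3
      · exact Or.inl h1
      · exact Or.inr h2
      · exact Or.inr (hdν ▸ h3)
    have hupdν : Function.update h i0 wν = h := by rw [← hdν, hupd]
    have hz : S (Function.update h i0 w1) = 0 := by
      have := hmulti h i0
      rw [hupd, hupdν] at this
      linarith
    have hb : |S (Function.update h i0 w1) - 1| ≤ δ := by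
      apply hbase
      intro j
      rcases eq_or_ne j i0 with rfl | hji
      · simp
      · simp only [Function.update_of_ne hji]; exact hall j
    rw [hz] at hb
    have hδ1 : (1 : ℝ) ≤ δ := by
      have := abs_nonneg (0 - 1 : ℝ); rw [abs_sub_comm] at hb; simp at hb; linarith
    have hbh := hbase h hall
    calc |S h| ≤ |S h - 1| + 1 := by
          have := abs_sub_abs_le_abs_sub (S h) 1; simp at this ⊢; linarith [abs_abs (S h)]
      _ ≤ δ + δ := by linarith
      _ ≤ 2 ^ K * δ := by linarith
  by_cases hd1 : wd = w1
  · -- then S (update h i0 wν) = 2 * S h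
    have hall : ∀ j, h j = w1 ∨ h j = wν := by
      intro j
      rcases hh j with h1 | h2 | h3
      · exact Or.inl h1
      · exact Or.inr h2
      · exact Or.inl (hd1 ▸ h3)
    have hupd1 : Function.update h i0 w1 = h := by rw [← hd1, hupd]
    have hdouble : S (Function.update h i0 wν) = 2 * S h := by
      have := hmulti h i0
      rw [hupd, hupd1] at this
      linarith
    have hbν : |S (Function.update h i0 wν) - 1| ≤ δ := by
      apply hbase
      intro j
      rcases eq_or_ne j i0 with rfl | hji
      · simp
      · simp only [Function.update_of_ne hji]; exact hall j
    rw [hdouble] at hbν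
    have hbh := hbase h hall
    have : |S h| ≤ 2 * δ := by
      have h1 : |2 * S h - 1 - (S h - 1)| ≤ |2 * S h - 1| + |S h - 1| := abs_sub _ _
      have h2 : 2 * S h - 1 - (S h - 1) = S h := by ring
      rw [h2] at h1
      linarith
    linarith
  · have := stmt_1_aux w1 wν wd S δ hδ hmulti hbase
      (fun hc => hd1 hc) (fun hc => hdν hc) K h hh hKcard
    rw [if_neg (by omega)] at this
    simpa using this
end

section
/- Let X_1,…,X_k be finite nonempty sets, k ≥ 2, and let g, g̃ : assignments with g_{−j}, g̃_{−j} : ∏_{i≠j} X_i → [0,1] for each j ∈ [k]. Suppose that for every j and all functions a_i : (tuples omitting coordinates i and j) → [0,1] (i ≠ j), |E_{x}[(g_{−j} − g̃_{−j})(x_{−j}) ∏_{i≠j} a_i(x_{−i,j})]| ≤ ε. Then |E_{x_1,…,x_k}[∏_{j=1}^k g_{−j}(x_{−j}) − ∏_{j=1}^k g̃_{−j}(x_{−j})]| ≤ k·ε. -/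
/-!
Telescoping writes `∏ g_j - ∏ g̃_j` as `∑_j (g_j - g̃_j) ∏_{i<j} g_i ∏_{i>j} g̃_i`.
In the `j`-th term the other factors still depend on `x_j`, so they are not admissible test
functions for the cut condition at `j`; once `x_j` is frozen to a value `c` they are, and averaging
over `c` recovers the term. So each of the `k` terms has average at most `ε`.
-/

open Finset Function
open scoped BigOperators

theorem Fintype.prod_sub_prod_eq_sum_mul_prod_ne {ι R : Type*} [Fintype ι] [LinearOrder ι]
    [CommRing R] (f g : ι → R) :
    ∏ i, f i - ∏ i, g i =
      ∑ i, (f i - g i) * ∏ l : {l // l ≠ i}, (if l.1 < i then f l else g l) := by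
  have hsplit : ∀ i, ∏ l : {l // l ≠ i}, (if l.1 < i then f l else g l) =
      (∏ l with l < i, f l) * ∏ l with i < l, g l := by
    intro i
    rw [← Finset.prod_subtype (univ.erase i) (by simp) (fun l => if l < i then f l else g l),
      prod_ite]
    congr 2 <;> ext l
    · simpa using ne_of_lt
    · simpa [and_comm, eq_comm] using lt_iff_le_and_ne.symm
  have htelescope := prod_add_ordered univ g (f - g)
  simp only [Pi.sub_apply, add_sub_cancel] at htelescope
  simp only [htelescope, add_sub_cancel_left, hsplit, mul_assoc]

section Conditioning

variable {ι : Type*} [DecidableEq ι] {X : ι → Type*}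

def insertCoord {p : ι → Prop} (j : ι) (c : X j) (y : ∀ l : {l // p l ∧ l ≠ j}, X l) :
    ∀ l : {l // p l}, X l :=
  fun l => if h : l.1 = j then h ▸ c else y ⟨l.1, l.2, h⟩

theorem insertCoord_restrict {p : ι → Prop} (j : ι) (c : X j) (x : ∀ i, X i) :
    insertCoord j c (fun l : {l // p l ∧ l ≠ j} => x l) =
      fun l : {l // p l} => update x j c l := by
  funext ⟨l, hl⟩
  by_cases h : l = j
  · subst h; simp [insertCoord]
  · simp [insertCoord, h]

variable [Fintype ι] [∀ i, Fintype (X i)]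

theorem Fintype.expect_expect_update {M : Type*} [AddCommMonoid M] [Module ℚ≥0 M]
    (j : ι) [Nonempty (X j)] (f : (∀ i, X i) → M) :
    𝔼 c : X j, 𝔼 x, f (update x j c) = 𝔼 x, f x := by
  let e : X j × (∀ i, X i) ≃ X j × (∀ i, X i) :=
    { toFun p := (p.2 j, update p.2 j p.1)
      invFun p := (p.2 j, update p.2 j p.1)
      left_inv p := by simp
      right_inv p := by simp }
  rw [← expect_product' univ univ, univ_product_univ,
    Fintype.expect_equiv e (fun p => f (update p.2 j p.1)) (fun p => f p.2) (fun _ => rfl),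
    ← univ_product_univ, expect_product' univ univ (fun _ x => f x), Fintype.expect_const]

theorem abs_expect_le_of_forall_abs_expect_update_le {K : Type*} [Field K] [LinearOrder K]
    [IsStrictOrderedRing K] {j : ι} [Nonempty (X j)] {f : (∀ i, X i) → K} {ε : K}
    (h : ∀ c : X j, |𝔼 x, f (update x j c)| ≤ ε) : |𝔼 x, f x| ≤ ε := by
  rw [← Fintype.expect_expect_update j f]
  exact (abs_expect_le _ _).trans (expect_le univ_nonempty fun c _ => h c)

theorem abs_expect_mul_prod_le_of_cut {K : Type*} [Field K] [LinearOrder K]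
    [IsStrictOrderedRing K] {j : ι} [Nonempty (X j)] {ε : K}
    (D : (∀ i : {i // i ≠ j}, X i) → K)
    (hcut : ∀ a : (i : {i // i ≠ j}) → ((∀ l : {l // l ≠ i.1 ∧ l ≠ j}, X l) → K),
      (∀ i y, a i y ∈ Set.Icc (0 : K) 1) →
      |𝔼 x : ∀ i, X i, D (fun i => x i) * ∏ i, a i (fun l => x l)| ≤ ε)
    (H : (i : {i // i ≠ j}) → ((∀ l : {l // l ≠ i.1}, X l) → K))
    (hH : ∀ i y, H i y ∈ Set.Icc (0 : K) 1) :
    |𝔼 x : ∀ i, X i, D (fun i => x i) * ∏ i, H i (fun l => x l)| ≤ ε := by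
  refine abs_expect_le_of_forall_abs_expect_update_le (j := j) fun c => ?_
  refine le_of_eq_of_le ?_ (hcut (fun i y => H i (insertCoord j c y)) fun i y => hH i _)
  simp only [insertCoord_restrict]
  congr! 5 with x - i
  exact update_of_ne i.2 c x

end Conditioning

theorem stmt_3_general (k : ℕ) (X : Fin k → Type*)
    [∀ i, Fintype (X i)] [∀ i, Nonempty (X i)] (ε : ℝ)
    (g gt : (j : Fin k) → ((∀ i : {i : Fin k // i ≠ j}, X i.1) → ℝ))
    (hgmem : ∀ j y, g j y ∈ Set.Icc (0 : ℝ) 1)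
    (hgtmem : ∀ j y, gt j y ∈ Set.Icc (0 : ℝ) 1)
    (hcut : ∀ j : Fin k,
      ∀ a : (i : {i : Fin k // i ≠ j}) →
        ((∀ l : {l : Fin k // l ≠ i.1 ∧ l ≠ j}, X l.1) → ℝ),
      (∀ i y, a i y ∈ Set.Icc (0 : ℝ) 1) →
      |(∑ x : ∀ i, X i,
          (g j (fun i => x i.1) - gt j (fun i => x i.1)) *
            ∏ i : {i : Fin k // i ≠ j}, a i (fun l => x l.1)) /
          (Fintype.card (∀ i, X i) : ℝ)| ≤ ε) :
    |(∑ x : ∀ i, X i,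
        ((∏ j, g j (fun i => x i.1)) - ∏ j, gt j (fun i => x i.1))) /
        (Fintype.card (∀ i, X i) : ℝ)| ≤ k * ε := by
  simp only [← Fintype.expect_eq_sum_div_card] at hcut ⊢
  have hterm : ∀ j, |𝔼 x : ∀ i, X i, (g j (fun i => x i.1) - gt j (fun i => x i.1)) *
      ∏ l : {l // l ≠ j},
        (if l.1 < j then g l (fun i => x i.1) else gt l (fun i => x i.1))| ≤ ε :=
    fun j => abs_expect_mul_prod_le_of_cut (fun y => g j y - gt j y) (hcut j)
      (fun i y => if i.1 < j then g i y else gt i y)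
      (fun i y => by split_ifs; exacts [hgmem _ _, hgtmem _ _])
  simp only [Fintype.prod_sub_prod_eq_sum_mul_prod_ne, expect_sum_comm]
  calc _ ≤ ∑ j, |_| := abs_sum_le_sum_abs _ _
    _ ≤ ∑ _j : Fin k, ε := sum_le_sum fun j _ => hterm j
    _ = k * ε := by simp

theorem stmt_3 (k : ℕ) (hk : 2 ≤ k) (X : Fin k → Type*)
    [∀ i, Fintype (X i)] [∀ i, Nonempty (X i)] (ε : ℝ)
    (g gt : (j : Fin k) → ((∀ i : {i : Fin k // i ≠ j}, X i.1) → ℝ))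
    (hgmem : ∀ j y, g j y ∈ Set.Icc (0 : ℝ) 1)
    (hgtmem : ∀ j y, gt j y ∈ Set.Icc (0 : ℝ) 1)
    (hcut : ∀ j : Fin k,
      ∀ a : (i : {i : Fin k // i ≠ j}) →
        ((∀ l : {l : Fin k // l ≠ i.1 ∧ l ≠ j}, X l.1) → ℝ),
      (∀ i y, a i y ∈ Set.Icc (0 : ℝ) 1) →
      |(∑ x : ∀ i, X i,
          (g j (fun i => x i.1) - gt j (fun i => x i.1)) *
            ∏ i : {i : Fin k // i ≠ j}, a i (fun l => x l.1)) /
          (Fintype.card (∀ i, X i) : ℝ)| ≤ ε) :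
    |(∑ x : ∀ i, X i,
        ((∏ j, g j (fun i => x i.1)) - ∏ j, gt j (fun i => x i.1))) /
        (Fintype.card (∀ i, X i) : ℝ)| ≤ k * ε :=
  stmt_3_general k X ε g gt hgmem hgtmem hcut
end

section
/- Let r ≥ 1 and let h : X_1 × ⋯ × X_r → ℝ on finite nonempty sets, and let A_j ⊆ ∏_{i≠j} X_i for j ∈ [r]. Then |E_{x_1,…,x_r}[h(x_1,…,x_r) ∏_{j=1}^r 1_{A_j}(x_{−j})]| ≤ ‖h‖_{U^r}, where ‖h‖_{U^r} is the Gowers box norm defined by ‖h‖_{U^r}^{2^r} = E_{x_i^{(0)},x_i^{(1)}} ∏_{ω ∈ {0,1}^r} h(x^{(ω)}). Consequently ‖h‖_{□,r} ≤ ‖h‖_{U^r}. -/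
/-!
Write `T D` for the average of `∏_ω h(x^ω) ∏_{j ∉ D} 1_{A_j}(x^ω_{-j})` over doubled points
`x = (x_i^(0), x_i^(1))_i`, the product running over the vertices `ω` of the cube `{0,1}^ι`
supported in `D`. Then `T ∅` is the left-hand side and `T univ` is `‖h‖_{U^r}^{2^r}`.
Doubling one more coordinate `κ ∉ D` costs one Cauchy–Schwarz step, `T D ^ 2 ≤ T (insert κ D)`:
the factor `1_{A_κ}` does not depend on the `κ`-th coordinate, so it can be pulled out of the
average over that coordinate and then discarded, being bounded by `1`. Iterating gives
`|T ∅| ^ 2 ^ r ≤ T univ`, and the last step also shows `T univ ≥ 0`.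
-/

open Finset
open scoped BigOperators

namespace GowersCauchySchwarz

section Expectation

variable {α β γ M : Type*} [Fintype α] [Fintype β] [Fintype γ]
  [AddCommMonoid M] [Module ℚ≥0 M]

lemma expect_boolArrow (f : α → α → M) :
    𝔼 c : Bool → α, f (c false) (c true) = 𝔼 a, 𝔼 b, f a b := by
  rw [← expect_product', univ_product_univ]
  exact Fintype.expect_equiv (Equiv.boolArrowEquivProd α) _ _ fun _ => rfl

lemma expect_boolArrow_false (f : α → M) : 𝔼 c : Bool → α, f (c false) = 𝔼 a, f a := by
  rcases isEmpty_or_nonempty α with hα | hα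
  · simp
  · simpa using expect_boolArrow fun a (_ : α) => f a

lemma expect_piSplitAt {ι : Type*} [DecidableEq ι] [Fintype ι] {X : ι → Type*}
    [∀ i, Fintype (X i)] (κ : ι) (F : (∀ i, X i) → M) :
    𝔼 x, F x = 𝔼 c, 𝔼 w, F ((Equiv.piSplitAt κ X).symm (c, w)) := by
  rw [← expect_product', univ_product_univ]
  exact Fintype.expect_equiv (Equiv.piSplitAt κ X) _ _ fun x =>
    congrArg F ((Equiv.piSplitAt κ X).symm_apply_apply x).symm

lemma sq_expect_mul_expect_le (u : β → ℝ) (hu : ∀ b, |u b| ≤ 1) (s : β → γ → ℝ) :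
    (𝔼 b, u b * 𝔼 c, s b c) ^ 2 ≤ 𝔼 b, (𝔼 c, s b c) ^ 2 := by
  have hu2 : 𝔼 b, u b ^ 2 ≤ 1 := by
    rcases isEmpty_or_nonempty β with hβ | hβ
    · simp
    · exact expect_le univ_nonempty fun b _ => (sq_le_one_iff_abs_le_one (u b)).2 (hu b)
  calc (𝔼 b, u b * 𝔼 c, s b c) ^ 2 ≤ (𝔼 b, u b ^ 2) * 𝔼 b, (𝔼 c, s b c) ^ 2 :=
        expect_mul_sq_le_sq_mul_sq _ _ _
    _ ≤ 𝔼 b, (𝔼 c, s b c) ^ 2 :=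
        mul_le_of_le_one_left (expect_nonneg fun b _ => sq_nonneg _) hu2

end Expectation

variable {ι : Type*} [DecidableEq ι] {X : ι → Type*}

def vertex (x : ∀ i, Bool → X i) (ω : ι → Bool) : ∀ i, X i := fun i => x i (ω i)

lemma vertex_piSplitAt_symm_update {κ : ι} (c : Bool → X κ) (w : ∀ j : {j // j ≠ κ}, Bool → X j)
    (ω : ι → Bool) (ε : Bool) :
    vertex ((Equiv.piSplitAt κ _).symm (c, w)) (Function.update ω κ ε)
      = vertex ((Equiv.piSplitAt κ _).symm (fun _ => c ε, w)) ω := by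
  funext i
  rcases eq_or_ne i κ with rfl | hne
  · simp [vertex]
  · simp [vertex, hne]

variable [Fintype ι]

def cubeOn (D : Finset ι) : Finset (ι → Bool) := {ω | ∀ i, ω i = true → i ∈ D}

lemma mem_cubeOn {D : Finset ι} {ω : ι → Bool} : ω ∈ cubeOn D ↔ ∀ i, ω i = true → i ∈ D := by
  simp [cubeOn]

lemma apply_eq_false_of_mem_cubeOn {D : Finset ι} {ω : ι → Bool} (hω : ω ∈ cubeOn D) {i : ι}
    (hi : i ∉ D) : ω i = false := by
  by_contra hne
  exact hi (mem_cubeOn.1 hω i (by simpa using hne))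

lemma cubeOn_empty : cubeOn (∅ : Finset ι) = {fun _ => false} := by
  ext ω
  simp [mem_cubeOn, funext_iff]

lemma cubeOn_univ : cubeOn (univ : Finset ι) = univ := by
  ext ω
  simp [mem_cubeOn]

lemma prod_cubeOn_insert {M : Type*} [CommMonoid M] {D : Finset ι} {κ : ι} (hκ : κ ∉ D)
    (f : (ι → Bool) → M) :
    ∏ ω ∈ cubeOn (insert κ D), f ω = ∏ ε : Bool, ∏ ω ∈ cubeOn D, f (Function.update ω κ ε) := by
  rw [← prod_product' univ (cubeOn D) fun ε ω => f (Function.update ω κ ε)]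
  refine prod_nbij' (fun ω => (ω κ, Function.update ω κ false))
    (fun p => Function.update p.2 κ p.1) ?_ ?_ ?_ ?_ ?_
  · intro ω hω
    simp only [mem_product, mem_univ, true_and, mem_cubeOn] at hω ⊢
    intro i hi
    rcases eq_or_ne i κ with rfl | hne
    · simp at hi
    · simpa [hne] using hω i (by simpa [hne] using hi)
  · intro p hp
    simp only [mem_product, mem_univ, true_and, mem_cubeOn] at hp ⊢
    intro i hi
    rcases eq_or_ne i κ with rfl | hne
    · simp
    · exact mem_insert_of_mem (hp i (by simpa [hne] using hi))
  · intro ω _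
    simp
  · rintro ⟨ε, ω⟩ hp
    simp only [mem_product, mem_univ, true_and] at hp
    simp [← apply_eq_false_of_mem_cubeOn hp hκ]
  · intro ω _
    simp

variable (h : (∀ i, X i) → ℝ) (A : (j : ι) → Set (∀ i : {i // i ≠ j}, X i.1))

noncomputable def cubeProduct (D J : Finset ι) (x : ∀ i, Bool → X i) : ℝ :=
  ∏ ω ∈ cubeOn D, (h (vertex x ω) * ∏ j ∈ J, (A j).indicator 1 fun i => vertex x ω i.1)

lemma cubeProduct_piSplitAt_symm {D : Finset ι} {κ : ι} (hκ : κ ∉ D) (c : Bool → X κ)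
    (w : ∀ j : {j // j ≠ κ}, Bool → X j) :
    cubeProduct h A D Dᶜ ((Equiv.piSplitAt κ _).symm (c, w))
      = (∏ ω ∈ cubeOn D, (A κ).indicator 1 fun i : {i // i ≠ κ} => w i (ω i))
        * cubeProduct h A D (insert κ D)ᶜ ((Equiv.piSplitAt κ _).symm (fun _ => c false, w)) := by
  have hcompl : Dᶜ = insert κ (insert κ D)ᶜ := by
    ext i
    by_cases hi : i = κ <;> simp [hi, hκ]
  simp only [cubeProduct, ← prod_mul_distrib]
  refine prod_congr rfl fun ω hω => ?_
  -- `ω κ = false`, so only `c false` is read, and the `A κ` factor does not read `c` at all.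
  have hvertex : vertex ((Equiv.piSplitAt κ _).symm (c, w)) ω
      = vertex ((Equiv.piSplitAt κ _).symm (fun _ => c false, w)) ω := by
    simpa [← apply_eq_false_of_mem_cubeOn hω hκ] using vertex_piSplitAt_symm_update c w ω (ω κ)
  have hrestrict : (fun i : {i // i ≠ κ} =>
      vertex ((Equiv.piSplitAt κ _).symm (fun _ => c false, w)) ω i) = fun i => w i (ω i) :=
    funext fun i => by simp [vertex, i.2]
  rw [hvertex, hcompl, prod_insert (by simp), hrestrict]
  ring

lemma cubeProduct_insert_piSplitAt_symm {D : Finset ι} {κ : ι} (hκ : κ ∉ D) (c : Bool → X κ)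
    (w : ∀ j : {j // j ≠ κ}, Bool → X j) :
    cubeProduct h A (insert κ D) (insert κ D)ᶜ ((Equiv.piSplitAt κ _).symm (c, w))
      = cubeProduct h A D (insert κ D)ᶜ ((Equiv.piSplitAt κ _).symm (fun _ => c false, w))
        * cubeProduct h A D (insert κ D)ᶜ ((Equiv.piSplitAt κ _).symm (fun _ => c true, w)) := by
  rw [cubeProduct, prod_cubeOn_insert hκ, Fintype.prod_bool, mul_comm]
  simp only [cubeProduct, vertex_piSplitAt_symm_update]

variable [∀ i, Fintype (X i)]

noncomputable def boxAverage (D : Finset ι) : ℝ := 𝔼 x, cubeProduct h A D Dᶜ x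

lemma boxAverage_empty :
    boxAverage h A ∅ = 𝔼 x, h x * ∏ j, (A j).indicator 1 fun i => x i.1 := by
  rw [boxAverage,
    ← expect_boolArrow_false fun x : ∀ i, X i => h x * ∏ j, (A j).indicator 1 fun i => x i.1]
  refine Fintype.expect_equiv (Equiv.piComm fun i (_ : Bool) => X i) _ _ fun x => ?_
  simp only [cubeProduct, cubeOn_empty, prod_singleton, compl_empty]
  rfl

lemma boxAverage_univ : boxAverage h A univ = 𝔼 x, ∏ ω, h (vertex x ω) := by
  simp [boxAverage, cubeProduct, cubeOn_univ]

lemma boxAverage_sq_le_insert {D : Finset ι} {κ : ι} (hκ : κ ∉ D) :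
    boxAverage h A D ^ 2 ≤ boxAverage h A (insert κ D) := by
  let u (w : ∀ j : {j // j ≠ κ}, Bool → X j) : ℝ :=
    ∏ ω ∈ cubeOn D, (A κ).indicator 1 fun i : {i // i ≠ κ} => w i (ω i)
  let s (w : ∀ j : {j // j ≠ κ}, Bool → X j) (a : X κ) : ℝ :=
    cubeProduct h A D (insert κ D)ᶜ ((Equiv.piSplitAt κ _).symm (fun _ => a, w))
  have hu : ∀ w, |u w| ≤ 1 := fun w => by
    rw [abs_prod]
    refine prod_le_one (fun _ _ => abs_nonneg _) fun ω _ => ?_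
    unfold Set.indicator
    split_ifs <;> simp
  calc boxAverage h A D ^ 2 = (𝔼 w, u w * 𝔼 a, s w a) ^ 2 := by
        simp only [boxAverage, expect_piSplitAt κ, cubeProduct_piSplitAt_symm h A hκ, mul_expect]
        rw [expect_boolArrow_false fun a => 𝔼 w, u w * s w a, expect_comm]
    _ ≤ 𝔼 w, (𝔼 a, s w a) ^ 2 := sq_expect_mul_expect_le u hu s
    _ = boxAverage h A (insert κ D) := by
        simp only [boxAverage, expect_piSplitAt κ, cubeProduct_insert_piSplitAt_symm h A hκ, sq,
          expect_mul_expect]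
        rw [expect_boolArrow fun a b => 𝔼 w, s w a * s w b, expect_comm]
        exact expect_congr rfl fun _ _ => expect_comm ..

lemma abs_boxAverage_empty_pow_le (D : Finset ι) :
    |boxAverage h A ∅| ^ 2 ^ #D ≤ |boxAverage h A D| := by
  induction D using Finset.induction_on with
  | empty => simp
  | insert κ D hκ ih =>
    rw [card_insert_of_notMem hκ, pow_succ, pow_mul]
    calc (|boxAverage h A ∅| ^ 2 ^ #D) ^ 2 ≤ |boxAverage h A D| ^ 2 :=
          pow_le_pow_left₀ (by positivity) ih 2
      _ = boxAverage h A D ^ 2 := sq_abs _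
      _ ≤ boxAverage h A (insert κ D) := boxAverage_sq_le_insert h A hκ
      _ ≤ |boxAverage h A (insert κ D)| := le_abs_self _

lemma boxAverage_nonneg {D : Finset ι} (hD : D.Nonempty) : 0 ≤ boxAverage h A D := by
  obtain ⟨κ, hκ⟩ := hD
  rw [← insert_erase hκ]
  exact (sq_nonneg _).trans (boxAverage_sq_le_insert h A (notMem_erase κ D))

theorem abs_expect_mul_prod_indicator_le [Nonempty ι] :
    |𝔼 x, h x * ∏ j, (A j).indicator 1 fun i => x i.1|
      ≤ (𝔼 x : ∀ i, Bool → X i, ∏ ω, h (vertex x ω)) ^ ((1 : ℝ) / 2 ^ Fintype.card ι) := by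
  rw [← boxAverage_empty, ← boxAverage_univ, one_div,
    Real.le_rpow_inv_iff_of_pos (abs_nonneg _) (boxAverage_nonneg h A univ_nonempty)
      (by positivity)]
  exact_mod_cast abs_boxAverage_empty_pow_le h A univ |>.trans_eq
    (abs_of_nonneg (boxAverage_nonneg h A univ_nonempty))

end GowersCauchySchwarz

open scoped Classical

theorem stmt_15_general (r : ℕ) (hr : 1 ≤ r) (X : Fin r → Type*)
    [∀ i, Fintype (X i)] (h : (∀ i, X i) → ℝ)
    (A : (j : Fin r) → Set (∀ i : {i : Fin r // i ≠ j}, X i.1)) :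
    |(∑ x : ∀ i, X i, h x * ∏ j, (A j).indicator 1 (fun i => x i.1)) /
        (Fintype.card (∀ i, X i) : ℝ)|
      ≤ ((∑ x : ∀ i : Fin r, Bool → X i,
            ∏ ω : Fin r → Bool, h (fun i => x i (ω i))) /
          (Fintype.card (∀ i : Fin r, Bool → X i) : ℝ)) ^ ((1 : ℝ) / 2 ^ r) := by
  have : Nonempty (Fin r) := ⟨⟨0, hr⟩⟩
  have key := GowersCauchySchwarz.abs_expect_mul_prod_indicator_le h A
  rw [Fintype.card_fin] at key
  rwa [Fintype.expect_eq_sum_div_card, Fintype.expect_eq_sum_div_card] at key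

theorem stmt_15 (r : ℕ) (hr : 1 ≤ r) (X : Fin r → Type*)
    [∀ i, Fintype (X i)] [∀ i, Nonempty (X i)] (h : (∀ i, X i) → ℝ)
    (A : (j : Fin r) → Set (∀ i : {i : Fin r // i ≠ j}, X i.1)) :
    |(∑ x : ∀ i, X i, h x * ∏ j, (A j).indicator 1 (fun i => x i.1)) /
        (Fintype.card (∀ i, X i) : ℝ)|
      ≤ ((∑ x : ∀ i : Fin r, Bool → X i,
            ∏ ω : Fin r → Bool, h (fun i => x i (ω i))) /
          (Fintype.card (∀ i : Fin r, Bool → X i) : ℝ)) ^ ((1 : ℝ) / 2 ^ r) :=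
  stmt_15_general r hr X h A
end

section
/- Let k ≥ 2 and suppose ν : ZMod N → [0,∞) satisfies the (k,δ)-linear forms condition (Definition 2.2). Then ‖ν − 1‖_{U^{k−1}} ≤ 2·δ^{1/2^{k−1}}, where the U^{k−1} norm of f : ZMod N → ℝ is defined via ‖f‖_{U^{k−1}}^{2^{k−1}} = E over a suitable 2^{k−1}-fold product of values of f at the linear forms appearing in the LFC with all exponents corresponding to one fixed index j. -/
/-- The `(k,δ)`-linear forms condition, arithmetic setting (Definition 2.2). -/
def LinearFormsCondition (N : ℕ) [NeZero N] (k : ℕ) (ν : ZMod N → ℝ) (δ : ℝ) : Prop :=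
  ∀ e : (j : Fin k) → (({i : Fin k // i ≠ j} → Bool) → ℕ),
    (∀ j ω, e j ω ≤ 1) →
    |(∑ x : Fin k → Bool → ZMod N,
        ∏ j, ∏ ω : {i : Fin k // i ≠ j} → Bool,
          ν (∑ i : Fin k, (((j : ℕ) : ZMod N) - ((i : ℕ) : ZMod N)) *
              (if h : i = j then 0 else x i (ω ⟨i, h⟩))) ^ e j ω) /
        (Fintype.card (Fin k → Bool → ZMod N) : ℝ) - 1| ≤ δ

/-- The `2^(k-1)`-th power of the `U^(k-1)` norm of `f : ZMod N → ℝ`, defined via the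
linear forms of the LFC with all exponents corresponding to the fixed index `j = k`
(so the coefficients are `k - i` for `i = 1, …, k-1`). -/
noncomputable def UnormPow (N : ℕ) [NeZero N] (k : ℕ) (f : ZMod N → ℝ) : ℝ :=
  (∑ x : Fin (k - 1) → Bool → ZMod N,
      ∏ ω : Fin (k - 1) → Bool,
        f (∑ i : Fin (k - 1), ((k : ZMod N) - (((i : ℕ) + 1 : ℕ) : ZMod N)) * x i (ω i))) /
    (Fintype.card (Fin (k - 1) → Bool → ZMod N) : ℝ)

/-- `Fin m` is equivalent to the non-last elements of `Fin (m+1)`. -/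
def eSub (m : ℕ) : Fin m ≃ {i : Fin (m + 1) // i ≠ Fin.last m} where
  toFun i := ⟨i.castSucc, (Fin.castSucc_lt_last i).ne⟩
  invFun i := ⟨(i : Fin (m + 1)).val, Fin.val_lt_last i.2⟩
  left_inv i := by simp [Fin.ext_iff]
  right_inv i := by simp [Fin.ext_iff]

theorem stmt_16 (N : ℕ) [NeZero N] (k : ℕ) (hk : 2 ≤ k)
    (ν : ZMod N → ℝ) (hν : ∀ x, 0 ≤ ν x) (δ : ℝ) (hδ : 0 < δ)
    (hLFC : LinearFormsCondition N k ν δ) :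
    UnormPow N k (fun y => ν y - 1) ^ ((1 : ℝ) / 2 ^ (k - 1)) ≤ 2 * δ ^ ((1 : ℝ) / 2 ^ (k - 1)) := by
  classical
  obtain ⟨m, rfl⟩ : ∃ m, k = m + 1 := ⟨k - 1, by omega⟩
  have hm : 1 ≤ m := by omega
  set L : (Fin m → Bool) → (Fin m → Bool → ZMod N) → ZMod N :=
    fun ω x => ∑ i : Fin m, (((m + 1 : ℕ) : ZMod N) - (((i : ℕ) + 1 : ℕ) : ZMod N)) * x i (ω i)
    with hLdef
  set A : Finset (Fin m → Bool) → ℝ :=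
    fun S => (∑ y : Fin m → Bool → ZMod N, ∏ ω ∈ S, ν (L ω y)) /
      (Fintype.card (Fin m → Bool → ZMod N) : ℝ) with hAdef
  have hA : ∀ S : Finset (Fin m → Bool), |A S - 1| ≤ δ := by
    intro S
    set e : (j : Fin (m + 1)) → ({i : Fin (m + 1) // i ≠ j} → Bool) → ℕ :=
      fun j ω => if hj : j = Fin.last m then
          (if (fun i' : Fin m =>
              ω ⟨i'.castSucc, by rw [hj]; exact (Fin.castSucc_lt_last i').ne⟩) ∈ S then 1 else 0)
        else 0 with hedef
    have he : ∀ j ω, e j ω ≤ 1 := by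
      intro j ω; simp only [hedef]; split_ifs <;> simp
    have H := hLFC e he
    set Φ : (Fin m → Bool) ≃ ({i : Fin (m + 1) // i ≠ Fin.last m} → Bool) :=
      (eSub m).arrowCongr (Equiv.refl Bool) with hΦdef
    have hΦapp : ∀ (ω' : Fin m → Bool) (i' : Fin m) (h : i'.castSucc ≠ Fin.last m),
        Φ ω' ⟨i'.castSucc, h⟩ = ω' i' := by
      intro ω' i' h
      simp only [hΦdef, Equiv.arrowCongr_apply, Function.comp_apply, Equiv.refl_apply]
      congr 1
    have hform : ∀ (x : Fin (m + 1) → Bool → ZMod N) (ω' : Fin m → Bool),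
        (∑ i : Fin (m + 1), (((Fin.last m : ℕ) : ZMod N) - ((i : ℕ) : ZMod N)) *
            (if h : i = Fin.last m then 0 else x i ((Φ ω') ⟨i, h⟩)))
          = L ω' (fun i' b => x i'.castSucc b) := by
      intro x ω'
      rw [Fin.sum_univ_castSucc]
      rw [dif_pos rfl, mul_zero, add_zero, hLdef]
      refine Finset.sum_congr rfl fun i' _ => ?_
      rw [dif_neg (Fin.castSucc_lt_last i').ne, hΦapp]
      congr 1
      push_cast [Fin.val_last, Fin.coe_castSucc]
      ring
    have heval : ∀ ω' : Fin m → Bool, e (Fin.last m) (Φ ω') = if ω' ∈ S then 1 else 0 := by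
      intro ω'
      have hfun : (fun i' : Fin m =>
          (Φ ω') ⟨i'.castSucc, (Fin.castSucc_lt_last i').ne⟩) = ω' :=
        funext fun i' => hΦapp ω' i' _
      simp only [hedef, dif_pos, hfun]
    have hstep1 : ∀ x : Fin (m + 1) → Bool → ZMod N,
        (∏ j, ∏ ω : {i : Fin (m + 1) // i ≠ j} → Bool,
          ν (∑ i : Fin (m + 1), (((j : ℕ) : ZMod N) - ((i : ℕ) : ZMod N)) *
              (if h : i = j then 0 else x i (ω ⟨i, h⟩))) ^ e j ω)
          = ∏ ω' ∈ S, ν (L ω' (fun i' b => x i'.castSucc b)) := by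
      intro x
      rw [Fintype.prod_eq_single (Fin.last m) (fun j hj => Finset.prod_eq_one fun ω _ => by
        simp [hedef, hj])]
      rw [← Equiv.prod_comp Φ]
      rw [← Finset.univ_inter S, ← Finset.prod_ite_mem]
      refine Finset.prod_congr rfl fun ω' _ => ?_
      rw [hform x ω', heval ω']
      split_ifs <;> simp
    have hstep2 : (∑ x : Fin (m + 1) → Bool → ZMod N,
          ∏ ω' ∈ S, ν (L ω' (fun i' b => x i'.castSucc b)))
        = (Fintype.card (Bool → ZMod N) : ℝ) *
            ∑ y : Fin m → Bool → ZMod N, ∏ ω' ∈ S, ν (L ω' y) := by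
      rw [← Equiv.sum_comp (Fin.insertNthEquiv (fun _ : Fin (m + 1) => Bool → ZMod N)
        (Fin.last m)) (fun x => ∏ ω' ∈ S, ν (L ω' (fun i' b => x i'.castSucc b)))]
      rw [Fintype.sum_prod_type]
      have : ∀ (a : Bool → ZMod N) (y : Fin m → Bool → ZMod N),
          (∏ ω' ∈ S, ν (L ω' (fun i' b =>
            (Fin.insertNthEquiv (fun _ : Fin (m + 1) => Bool → ZMod N) (Fin.last m)
              (a, y)) i'.castSucc b)))
          = ∏ ω' ∈ S, ν (L ω' y) := by
        intro a y
        have hy : (fun (i' : Fin m) (b : Bool) =>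
            (Fin.insertNthEquiv (fun _ : Fin (m + 1) => Bool → ZMod N) (Fin.last m)
              (a, y)) i'.castSucc b) = y := by
          funext i' b
          simp [Fin.insertNth_last, Fin.snoc_castSucc]
        rw [hy]
      simp only [this]
      rw [Finset.sum_const, Finset.card_univ, nsmul_eq_mul]
    have hrw : (∑ x : Fin (m + 1) → Bool → ZMod N,
        ∏ j, ∏ ω : {i : Fin (m + 1) // i ≠ j} → Bool,
          ν (∑ i : Fin (m + 1), (((j : ℕ) : ZMod N) - ((i : ℕ) : ZMod N)) *
              (if h : i = j then 0 else x i (ω ⟨i, h⟩))) ^ e j ω) /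
        (Fintype.card (Fin (m + 1) → Bool → ZMod N) : ℝ) = A S := by
      simp only [hstep1]
      rw [hstep2, hAdef]
      have hcard : (Fintype.card (Fin (m + 1) → Bool → ZMod N) : ℝ)
          = (Fintype.card (Bool → ZMod N) : ℝ) *
            (Fintype.card (Fin m → Bool → ZMod N) : ℝ) := by
        push_cast [Fintype.card_fun, Fintype.card_fin]
        ring
      rw [hcard, mul_div_mul_left]
      exact Nat.cast_ne_zero.2 Fintype.card_ne_zero
    rwa [hrw] at H
  -- expansion of the norm
  have hexp : UnormPow N (m + 1) (fun y => ν y - 1) =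
      ∑ S : Finset (Fin m → Bool), (-1 : ℝ) ^ ((Finset.univ \ S).card) * A S := by
    have h0 : UnormPow N (m + 1) (fun y => ν y - 1)
        = (∑ x : Fin m → Bool → ZMod N, ∏ ω : Fin m → Bool, (ν (L ω x) - 1)) /
          (Fintype.card (Fin m → Bool → ZMod N) : ℝ) := rfl
    rw [h0]
    have h1 : ∀ x : Fin m → Bool → ZMod N,
        (∏ ω : Fin m → Bool, (ν (L ω x) - 1))
          = ∑ S : Finset (Fin m → Bool),
              (-1 : ℝ) ^ ((Finset.univ \ S).card) * ∏ ω ∈ S, ν (L ω x) := by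
      intro x
      simp only [sub_eq_add_neg]
      rw [Finset.prod_add, Finset.powerset_univ]
      exact Finset.sum_congr rfl fun S _ => by rw [Finset.prod_const]; ring
    simp only [h1]
    rw [Finset.sum_comm, Finset.sum_div]
    refine Finset.sum_congr rfl fun S _ => ?_
    rw [hAdef, ← Finset.mul_sum, mul_div_assoc]
  have hzero : ∑ S : Finset (Fin m → Bool), (-1 : ℝ) ^ ((Finset.univ \ S).card) = 0 := by
    have hz := Finset.prod_add (fun _ : Fin m → Bool => (1 : ℝ)) (fun _ => (-1 : ℝ)) Finset.univ
    rw [Finset.powerset_univ] at hz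
    simp only [Finset.prod_const, one_pow, one_mul] at hz
    rw [← hz, show ((1 : ℝ) + -1) = 0 by ring, Finset.card_univ,
      zero_pow Fintype.card_ne_zero]
  have hbound : |UnormPow N (m + 1) (fun y => ν y - 1)| ≤ 2 ^ 2 ^ m * δ := by
    have h1 : UnormPow N (m + 1) (fun y => ν y - 1) =
        ∑ S : Finset (Fin m → Bool), (-1 : ℝ) ^ ((Finset.univ \ S).card) * (A S - 1) := by
      rw [hexp]
      rw [Finset.sum_congr rfl (fun S _ => by ring :
        ∀ S ∈ Finset.univ, (-1 : ℝ) ^ ((Finset.univ \ S).card) * (A S - 1) =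
          (-1 : ℝ) ^ ((Finset.univ \ S).card) * A S - (-1 : ℝ) ^ ((Finset.univ \ S).card))]
      rw [Finset.sum_sub_distrib, hzero, sub_zero]
    rw [h1]
    calc |∑ S : Finset (Fin m → Bool), (-1 : ℝ) ^ ((Finset.univ \ S).card) * (A S - 1)|
        ≤ ∑ S : Finset (Fin m → Bool), |(-1 : ℝ) ^ ((Finset.univ \ S).card) * (A S - 1)| :=
          Finset.abs_sum_le_sum_abs _ _
      _ ≤ ∑ _S : Finset (Fin m → Bool), δ := by
          apply Finset.sum_le_sum
          intro S _
          rw [abs_mul, abs_pow, abs_neg, abs_one, one_pow, one_mul]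
          exact hA S
      _ = 2 ^ 2 ^ m * δ := by
          rw [Finset.sum_const, Finset.card_univ, Fintype.card_finset, nsmul_eq_mul]
          push_cast [Fintype.card_fun, Fintype.card_fin, Fintype.card_bool]
          ring
  simp only [Nat.add_sub_cancel] at *
  set U := UnormPow N (m + 1) (fun y => ν y - 1)
  have hy : (0 : ℝ) ≤ (1 : ℝ) / 2 ^ m := by positivity
  calc U ^ ((1 : ℝ) / 2 ^ m) ≤ |U ^ ((1 : ℝ) / 2 ^ m)| := le_abs_self _
    _ ≤ |U| ^ ((1 : ℝ) / 2 ^ m) := Real.abs_rpow_le_abs_rpow _ _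
    _ ≤ (2 ^ 2 ^ m * δ) ^ ((1 : ℝ) / 2 ^ m) :=
        Real.rpow_le_rpow (abs_nonneg _) hbound hy
    _ = 2 * δ ^ ((1 : ℝ) / 2 ^ m) := by
        rw [Real.mul_rpow (by positivity) hδ.le]
        congr 1
        rw [← Real.rpow_natCast (2 : ℝ) (2 ^ m), ← Real.rpow_mul (by norm_num)]
        push_cast
        rw [mul_one_div, div_self (by positivity), Real.rpow_one]
end
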